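/- Consider the linear-plus-bounded-perturbation system ẋ = Ax + G(x)x with A, G as in the ILOS error dynamics, under the Lyapunov condition λ_min(Γ) > (p12 + sqrt(p12²+p22²))/Δ_LOS where Γ = -(AᵀP+PA). Then V(x) = xᵀPx satisfies V̇(x) ≤ -(λ_min(Γ) - (p12 + sqrt(p12²+p22²))/Δ_LOS)|x|² for all x, and hence the origin is globally exponentially stable. -/

import Mathlib

/-!
Differentiating `V(x) = xᵀPx` along `ẋ = Ax + g(x)Bx` gives `-xᵀΓx + g(x)·xᵀ(BᵀP + PB)x`.
The first term is at most `-λ_min(Γ)|x|²`; the gain `g(x) = Δ/(xᵀHx + Δ²)` lies in `[0, 1/Δ]`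
because `H` is positive semidefinite, and the largest eigenvalue of `BᵀP + PB` is
`p12 + √(p12² + p22²)`. Exponential stability is then the standard Lyapunov argument:
`m|x|² ≤ V ≤ M|x|²` turns `V̇ ≤ -μ|x|²` into `V̇ ≤ -(μ/M)V`, and Grönwall's inequality gives
`|x(t)|² ≤ (M/m)|x(0)|² e^{-(μ/M)t}`.
-/

open Real Matrix
open scoped RealInnerProductSpace

theorem le_mul_exp_of_hasDerivAt_le_mul {v v' : ℝ → ℝ} {K : ℝ}
    (hv : ∀ t, HasDerivAt v (v' t) t) (hK : ∀ t, v' t ≤ K * v t) {t : ℝ} (ht : 0 ≤ t) :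
    v t ≤ v 0 * exp (K * t) := by
  have := le_gronwallBound_of_liminf_deriv_right_le (δ := v 0) (ε := 0) (a := 0) (b := t)
    (fun s _ ↦ (hv s).continuousAt.continuousWithinAt)
    (fun s _ _ hr ↦ (hv s).hasDerivWithinAt.liminf_right_slope_le hr) le_rfl
    (fun s _ ↦ by simpa using hK s) t ⟨ht, le_rfl⟩
  simpa [gronwallBound_ε0] using this

theorem exists_norm_le_mul_exp_of_lyapunov {E : Type*} [NormedAddCommGroup E] [NormedSpace ℝ E]
    [Nontrivial E] {V : E → ℝ} {V' : E → E →L[ℝ] ℝ} {f : E → E} {m M μ : ℝ}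
    (hm : 0 < m) (hμ : 0 < μ) (hV : ∀ x, HasFDerivAt V (V' x) x)
    (hlow : ∀ x, m * ‖x‖ ^ 2 ≤ V x) (hup : ∀ x, V x ≤ M * ‖x‖ ^ 2)
    (hdec : ∀ x, V' x (f x) ≤ -μ * ‖x‖ ^ 2) :
    ∃ k > 0, ∃ lam > 0, ∀ x : ℝ → E, (∀ t, HasDerivAt x (f (x t)) t) →
      ∀ t ≥ 0, ‖x t‖ ≤ k * ‖x 0‖ * exp (-lam * t) := by
  have hM : 0 < M := by
    obtain ⟨x, hx⟩ := exists_ne (0 : E)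
    nlinarith [(hlow x).trans (hup x), pow_pos (norm_pos_iff.2 hx) 2]
  refine ⟨√(M / m), by positivity, μ / M / 2, by positivity, fun x hx t ht ↦ ?_⟩
  have hVx : ∀ s, V' (x s) (f (x s)) ≤ -(μ / M) * V (x s) := fun s ↦
    calc V' (x s) (f (x s)) ≤ -μ * ‖x s‖ ^ 2 := hdec (x s)
      _ = -(μ / M) * (M * ‖x s‖ ^ 2) := by field_simp
      _ ≤ -(μ / M) * V (x s) :=
        mul_le_mul_of_nonpos_left (hup (x s)) (neg_nonpos.2 (by positivity))
  have hdecay := le_mul_exp_of_hasDerivAt_le_mul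
    (fun s ↦ (hV (x s)).comp_hasDerivAt s (hx s)) hVx ht
  simp only [Function.comp_apply] at hdecay
  have hsq : ‖x t‖ ^ 2 ≤ (√(M / m) * ‖x 0‖ * exp (-(μ / M / 2) * t)) ^ 2 := by
    have hexp : exp (-(μ / M / 2) * t) ^ 2 = exp (-(μ / M) * t) := by
      rw [← exp_nat_mul]; ring_nf
    rw [mul_pow, mul_pow, hexp, sq_sqrt (by positivity), div_mul_eq_mul_div, div_mul_eq_mul_div,
      le_div_iff₀ hm]
    linarith [hlow (x t), mul_le_mul_of_nonneg_right (hup (x 0)) (exp_pos (-(μ / M) * t)).le]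
  exact pow_le_pow_iff_left₀ (norm_nonneg _) (by positivity) two_ne_zero |>.1 hsq

namespace ContinuousLinearMap

variable {F : Type*} [NormedAddCommGroup F] [InnerProductSpace ℝ F]

theorem exists_pos_mul_norm_sq_le_inner_apply_self [FiniteDimensional ℝ F] (T : F →L[ℝ] F)
    (hT : ∀ x ≠ 0, 0 < ⟪T x, x⟫) : ∃ m > 0, ∀ x, m * ‖x‖ ^ 2 ≤ ⟪T x, x⟫ := by
  rcases subsingleton_or_nontrivial F with hF | hF
  · exact ⟨1, one_pos, fun x ↦ by simp [Subsingleton.elim x 0]⟩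
  obtain ⟨u, hu, hmin⟩ := (isCompact_sphere (0 : F) 1).exists_isMinOn
    (NormedSpace.sphere_nonempty.2 zero_le_one)
    (by fun_prop : Continuous fun x ↦ ⟪T x, x⟫).continuousOn
  refine ⟨⟪T u, u⟫, hT u (ne_zero_of_mem_sphere one_ne_zero ⟨u, hu⟩), fun x ↦ ?_⟩
  rcases eq_or_ne x 0 with rfl | hx
  · simp
  have hx' : ‖x‖⁻¹ • x ∈ Metric.sphere (0 : F) 1 := by
    simp [norm_smul, inv_mul_cancel₀ (norm_ne_zero_iff.2 hx)]
  have hmin_x := isMinOn_iff.1 hmin _ hx'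
  simp only [map_smul, inner_smul_left, inner_smul_right, conj_trivial] at hmin_x
  have hpos : 0 < ‖x‖ := norm_pos_iff.2 hx
  calc ⟪T u, u⟫ * ‖x‖ ^ 2 ≤ ‖x‖⁻¹ * (‖x‖⁻¹ * ⟪T x, x⟫) * ‖x‖ ^ 2 := by gcongr
    _ = ⟪T x, x⟫ := by field_simp

theorem inner_apply_self_le (T : F →L[ℝ] F) (x : F) : ⟪T x, x⟫ ≤ ‖T‖ * ‖x‖ ^ 2 :=
  calc ⟪T x, x⟫ ≤ ‖T x‖ * ‖x‖ := real_inner_le_norm _ _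
    _ ≤ ‖T‖ * ‖x‖ * ‖x‖ := by gcongr; exact T.le_opNorm x
    _ = ‖T‖ * ‖x‖ ^ 2 := by ring

end ContinuousLinearMap

theorem Matrix.PosDef.exists_norm_le_mul_exp {n : Type*} [Fintype n] [DecidableEq n] [Nonempty n]
    {P : Matrix n n ℝ} (hP : P.PosDef) {f : EuclideanSpace ℝ n → EuclideanSpace ℝ n} {μ : ℝ}
    (hμ : 0 < μ) (hdec : ∀ x : EuclideanSpace ℝ n, 2 * (x ⬝ᵥ P *ᵥ f x) ≤ -μ * ‖x‖ ^ 2) :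
    ∃ k > 0, ∃ lam > 0, ∀ x : ℝ → EuclideanSpace ℝ n, (∀ t, HasDerivAt x (f (x t)) t) →
      ∀ t ≥ 0, ‖x t‖ ≤ k * ‖x 0‖ * exp (-lam * t) := by
  set T := toEuclideanCLM (𝕜 := ℝ) P
  have hT : (T : EuclideanSpace ℝ n →ₗ[ℝ] EuclideanSpace ℝ n).IsSymmetric :=
    isSymmetric_toEuclideanLin_iff.2 hP.isHermitian
  have hTP : ∀ x y, ⟪T x, y⟫ = x ⬝ᵥ P *ᵥ y := fun x y ↦ (hT x y).trans (inner_toEuclideanCLM P x y)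
  have hV : ∀ x, T.reApplyInnerSelf x = ⟪T x, x⟫ := T.reApplyInnerSelf_apply
  obtain ⟨m, hm, hlow⟩ := T.exists_pos_mul_norm_sq_le_inner_apply_self fun x hx ↦ by
    simpa [hTP] using hP.dotProduct_mulVec_pos (x := WithLp.ofLp x) (by simpa using hx)
  refine exists_norm_le_mul_exp_of_lyapunov (M := ‖T‖) hm hμ
    (hT.hasStrictFDerivAt_reApplyInnerSelf · |>.hasFDerivAt) (fun x ↦ ?_) (fun x ↦ ?_) (fun x ↦ ?_)
  · simpa [hV] using hlow x
  · simpa [hV] using T.inner_apply_self_le x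
  · simpa [hTP] using hdec x

theorem dotProduct_transpose_mul_add_mul_mulVec {n : Type*} [Fintype n] {A P : Matrix n n ℝ}
    (hP : P.IsSymm) (v : n → ℝ) : v ⬝ᵥ (Aᵀ * P + P * A) *ᵥ v = 2 * (v ⬝ᵥ P *ᵥ (A *ᵥ v)) := by
  have hsymm := dotProduct_transpose_mulVec P (A *ᵥ v) v
  rw [hP.eq] at hsymm
  rw [add_mulVec, dotProduct_add, ← mulVec_mulVec, ← mulVec_mulVec, dotProduct_transpose_mulVec,
    dotProduct_comm (P *ᵥ v), hsymm, two_mul]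

theorem two_mul_dotProduct_mulVec_add_smul_le {n : Type*} [Fintype n] {A B P Γ : Matrix n n ℝ}
    (hP : P.IsSymm) (hΓ : Γ = -(Aᵀ * P + P * A)) {x : EuclideanSpace ℝ n} {γ β c δ : ℝ}
    (hγ : γ * ‖x‖ ^ 2 ≤ x ⬝ᵥ Γ *ᵥ x) (hβ : 2 * (x ⬝ᵥ P *ᵥ (B *ᵥ x)) ≤ β * ‖x‖ ^ 2)
    (hβ0 : 0 ≤ β) (hc0 : 0 ≤ c) (hcδ : c ≤ δ⁻¹) :
    2 * (x ⬝ᵥ P *ᵥ (A *ᵥ x + c • B *ᵥ x)) ≤ -(γ - β / δ) * ‖x‖ ^ 2 := by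
  rw [hΓ, neg_mulVec, dotProduct_neg, dotProduct_transpose_mul_add_mul_mulVec hP] at hγ
  have hgain : c * (2 * (x ⬝ᵥ P *ᵥ (B *ᵥ x))) ≤ β / δ * ‖x‖ ^ 2 :=
    calc c * (2 * (x ⬝ᵥ P *ᵥ (B *ᵥ x))) ≤ c * (β * ‖x‖ ^ 2) := by gcongr
      _ ≤ δ⁻¹ * (β * ‖x‖ ^ 2) := by gcongr
      _ = β / δ * ‖x‖ ^ 2 := by ring
  rw [mulVec_add, mulVec_smul, dotProduct_add, dotProduct_smul, smul_eq_mul]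
  linarith

theorem abs_le_sqrt_sq_add_sq (p q : ℝ) : |p| ≤ √(p ^ 2 + q ^ 2) := by
  rw [← sqrt_sq_eq_abs]
  exact sqrt_le_sqrt (by nlinarith [sq_nonneg q])

theorem add_sqrt_sq_add_sq_nonneg (p q : ℝ) : 0 ≤ p + √(p ^ 2 + q ^ 2) := by
  linarith [neg_abs_le p, abs_le_sqrt_sq_add_sq p q]

theorem two_mul_mul_sq_add_mul_mul_le (p q a b : ℝ) :
    2 * (p * a ^ 2 + q * a * b) ≤ (p + √(p ^ 2 + q ^ 2)) * (a ^ 2 + b ^ 2) := by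
  set r := √(p ^ 2 + q ^ 2) with hr_def
  have hr : r ^ 2 = p ^ 2 + q ^ 2 := sq_sqrt (by positivity)
  rcases (sqrt_nonneg _).eq_or_lt with hr0 | hr0
  · obtain ⟨rfl, rfl⟩ : p = 0 ∧ q = 0 := by
      constructor <;> nlinarith [sq_nonneg p, sq_nonneg q]
    simp [hr_def]
  · have key : 2 * r * ((p + r) * (a ^ 2 + b ^ 2) - 2 * (p * a ^ 2 + q * a * b))
        = (q * a - (r + p) * b) ^ 2 + ((r - p) * a - q * b) ^ 2 := by
      linear_combination (a ^ 2 + b ^ 2) * hr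
    nlinarith [sq_nonneg (q * a - (r + p) * b), sq_nonneg ((r - p) * a - q * b)]

theorem two_mul_dotProduct_mulVec_lowerShift_le (p11 p12 p22 : ℝ) (x : EuclideanSpace ℝ (Fin 2)) :
    2 * (x ⬝ᵥ !![p11, p12; p12, p22] *ᵥ (!![0, 0; 1, 0] *ᵥ x)) ≤
      (p12 + √(p12 ^ 2 + p22 ^ 2)) * ‖x‖ ^ 2 := by
  have hquad : x ⬝ᵥ !![p11, p12; p12, p22] *ᵥ (!![0, 0; 1, 0] *ᵥ x) =
      p12 * x 0 ^ 2 + p22 * x 0 * x 1 := by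
    simp [dotProduct, mulVec, Fin.sum_univ_two]; ring
  have hnorm : ‖x‖ ^ 2 = x 0 ^ 2 + x 1 ^ 2 := by
    simp [EuclideanSpace.norm_sq_eq, Fin.sum_univ_two]
  rw [hquad, hnorm]
  exact two_mul_mul_sq_add_mul_mul_le p12 p22 (x 0) (x 1)

theorem dotProduct_mulVec_eq_sq (σ : ℝ) (v : Fin 2 → ℝ) :
    v ⬝ᵥ !![1, σ; σ, σ ^ 2] *ᵥ v = (v 0 + σ * v 1) ^ 2 := by
  simp [dotProduct, mulVec, Fin.sum_univ_two]; ring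

theorem div_add_sq_le_inv {q δ : ℝ} (hq : 0 ≤ q) (hδ : 0 < δ) : δ / (q + δ ^ 2) ≤ δ⁻¹ := by
  rw [div_le_iff₀ (by positivity)]
  field_simp
  linarith

theorem ILOS_Vdot_bound_GES_general (σ0 Δ : ℝ)
    (hΔ : 0 < Δ)
    (A H B : Matrix (Fin 2) (Fin 2) ℝ)
    (hH : H = !![1, σ0; σ0, σ0 ^ 2]) (hB : B = !![0, 0; 1, 0])
    (p11 p12 p22 : ℝ) (P : Matrix (Fin 2) (Fin 2) ℝ)
    (hP : P = !![p11, p12; p12, p22]) (hPpos : P.PosDef)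
    (Γ : Matrix (Fin 2) (Fin 2) ℝ) (hΓ : Γ = -(Aᵀ * P + P * A))
    (γ : ℝ)
    (hγmin : ∀ x : EuclideanSpace ℝ (Fin 2), γ * ‖x‖ ^ 2 ≤ dotProduct x (Γ.mulVec x))
    (hγ : γ > (p12 + Real.sqrt (p12 ^ 2 + p22 ^ 2)) / Δ)
    (f : EuclideanSpace ℝ (Fin 2) → EuclideanSpace ℝ (Fin 2))
    (hf : ∀ x : EuclideanSpace ℝ (Fin 2), f x = A.mulVec x +
      (Δ / (dotProduct x (H.mulVec x) + Δ ^ 2)) • B.mulVec x) :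
    (∀ x : EuclideanSpace ℝ (Fin 2),
      2 * dotProduct x (P.mulVec (f x)) ≤
        -(γ - (p12 + Real.sqrt (p12 ^ 2 + p22 ^ 2)) / Δ) * ‖x‖ ^ 2) ∧
    ∃ k > 0, ∃ lam > 0, ∀ x : ℝ → EuclideanSpace ℝ (Fin 2),
      (∀ t, HasDerivAt x (f (x t)) t) →
      ∀ t ≥ 0, ‖x t‖ ≤ k * ‖x 0‖ * Real.exp (-lam * t) := by
  have hVdot : ∀ x : EuclideanSpace ℝ (Fin 2), 2 * (x ⬝ᵥ P *ᵥ f x) ≤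
      -(γ - (p12 + √(p12 ^ 2 + p22 ^ 2)) / Δ) * ‖x‖ ^ 2 := fun x ↦ by
    have hHx : 0 ≤ x ⬝ᵥ H *ᵥ x := by rw [hH, dotProduct_mulVec_eq_sq]; positivity
    rw [hf x]
    exact two_mul_dotProduct_mulVec_add_smul_le (isHermitian_iff_isSymm.1 hPpos.isHermitian) hΓ
      (hγmin x) (hP ▸ hB ▸ two_mul_dotProduct_mulVec_lowerShift_le p11 p12 p22 x)
      (add_sqrt_sq_add_sq_nonneg p12 p22) (by positivity) (div_add_sq_le_inv hHx hΔ)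
  exact ⟨hVdot, hPpos.exists_norm_le_mul_exp (sub_pos.2 hγ) hVdot⟩

/-- For the ILOS error dynamics `ẋ = Ax + G(x)x`, under the Lyapunov condition
`λ_min(Γ) > (p12 + √(p12²+p22²))/Δ_LOS` with `Γ = -(AᵀP+PA)`, the Lyapunov function
`V(x) = xᵀPx` satisfies `V̇(x) ≤ -(λ_min(Γ) - (p12+√(p12²+p22²))/Δ_LOS)|x|²` for
all `x`, and the origin is globally exponentially stable. -/
theorem ILOS_Vdot_bound_GES (αd kd σ0 Δ : ℝ)
    (hα : 0 < αd) (hk : 0 < kd) (hσ : 0 < σ0) (hΔ : 0 < Δ)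
    (A H B : Matrix (Fin 2) (Fin 2) ℝ)
    (hA : A = (-αd) • !![1, σ0; 0, kd / αd])
    (hH : H = !![1, σ0; σ0, σ0 ^ 2]) (hB : B = !![0, 0; 1, 0])
    (p11 p12 p22 : ℝ) (P : Matrix (Fin 2) (Fin 2) ℝ)
    (hP : P = !![p11, p12; p12, p22]) (hPpos : P.PosDef)
    (Γ : Matrix (Fin 2) (Fin 2) ℝ) (hΓ : Γ = -(Aᵀ * P + P * A)) (hΓpos : Γ.PosDef)
    (γ : ℝ)
    (hγmin : ∀ x : EuclideanSpace ℝ (Fin 2), γ * ‖x‖ ^ 2 ≤ dotProduct x (Γ.mulVec x))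
    (hγeig : ∃ v : Fin 2 → ℝ, v ≠ 0 ∧ Γ.mulVec v = γ • v)
    (hγ : γ > (p12 + Real.sqrt (p12 ^ 2 + p22 ^ 2)) / Δ)
    (f : EuclideanSpace ℝ (Fin 2) → EuclideanSpace ℝ (Fin 2))
    (hf : ∀ x : EuclideanSpace ℝ (Fin 2), f x = A.mulVec x +
      (Δ / (dotProduct x (H.mulVec x) + Δ ^ 2)) • B.mulVec x) :
    (∀ x : EuclideanSpace ℝ (Fin 2),
      2 * dotProduct x (P.mulVec (f x)) ≤
        -(γ - (p12 + Real.sqrt (p12 ^ 2 + p22 ^ 2)) / Δ) * ‖x‖ ^ 2) ∧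
    ∃ k > 0, ∃ lam > 0, ∀ x : ℝ → EuclideanSpace ℝ (Fin 2),
      (∀ t, HasDerivAt x (f (x t)) t) →
      ∀ t ≥ 0, ‖x t‖ ≤ k * ‖x 0‖ * Real.exp (-lam * t) :=
  ILOS_Vdot_bound_GES_general σ0 Δ hΔ A H B hH hB p11 p12 p22 P hP hPpos Γ hΓ γ hγmin hγ f hf
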